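/- For each n ≥ 1, the quantity F_n satisfies the difference equation (2n+1)^2(2n+2)^2 p(n) F_{n+1} − q(n) F_n − (2n−1)^2(2n)^2 p(n+1) F_{n−1} = 0. -/

import Mathlib

open Filter Topology

noncomputable section

/-- The rational function
`R_n(t) = n!(2t+n+1)·[t(t-1)⋯(t-n+1)·(t+n+1)⋯(t+2n)] / ((t+1/2)(t+3/2)⋯(t+n+1/2))³`. -/
def R (n : ℕ) (t : ℝ) : ℝ :=
  (Nat.factorial n : ℝ) * (2*t + n + 1) *
    ((∏ i ∈ Finset.range n, (t - i)) * ∏ i ∈ Finset.range n, (t + n + 1 + i)) /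
    (∏ k ∈ Finset.range (n+1), (t + k + 1/2))^3

/-- `A_{jk}(n) = (1/j!)·(d/dt)^j (R_n(t)(t+k+1/2)³) |_{t = -k-1/2}`. -/
def A (n j k : ℕ) : ℝ :=
  (1 / (Nat.factorial j : ℝ)) *
    iteratedDeriv j (fun t : ℝ => R n t * (t + k + 1/2)^3) (-(k : ℝ) - 1/2)

/-- `F_n = Σ_{t≥0} (-1)^t R_n(t)`. -/
def F (n : ℕ) : ℝ := ∑' t : ℕ, (-1)^t * R n t

/-- `U_n = 2³ Σ_{k=0}^n (-1)^k A_{0k}(n)`. -/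
def U (n : ℕ) : ℝ := 2^3 * ∑ k ∈ Finset.range (n+1), (-1)^k * A n 0 k

/-- `U_n' = 2² Σ_{k=0}^n (-1)^k A_{1k}(n)`. -/
def U' (n : ℕ) : ℝ := 2^2 * ∑ k ∈ Finset.range (n+1), (-1)^k * A n 1 k

/-- `U_n'' = 2 Σ_{k=0}^n (-1)^k A_{2k}(n)`. -/
def U'' (n : ℕ) : ℝ := 2 * ∑ k ∈ Finset.range (n+1), (-1)^k * A n 2 k

/-- `V_n = Σ_{j=0}^2 2^{3-j} Σ_{k=0}^n (-1)^k A_{jk}(n) Σ_{l=0}^{k-1} (-1)^l/(2l+1)^{3-j}`. -/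
def V (n : ℕ) : ℝ :=
  ∑ j ∈ Finset.range 3, 2^(3-j) *
    ∑ k ∈ Finset.range (n+1), (-1)^k * A n j k *
      ∑ l ∈ Finset.range k, (-1)^l / (2*(l : ℝ)+1)^(3-j)

/-- Dirichlet's beta function `β(s) = Σ_{l≥0} (-1)^l/(2l+1)^s`, defined as the limit of
the partial sums (the series converges only conditionally for `s = 1`). -/
def beta (s : ℕ) : ℝ :=
  limUnder atTop (fun N : ℕ => ∑ l ∈ Finset.range N, (-1)^l / (2*(l : ℝ)+1)^s)

/-- `D n = lcm(1, 2, …, n)` (equal to `1` for `n = 0`). -/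
def D (n : ℕ) : ℕ := (Finset.Icc 1 n).lcm id

/-- Catalan's constant `G = β(2) = Σ_{l≥0} (-1)^l / (2l+1)²`. -/
def G : ℝ := ∑' l : ℕ, (-1)^l / (2*(l : ℝ)+1)^2

/-- `p(x) = 20x² - 8x + 1` (as a real function). -/
def pR (x : ℝ) : ℝ := 20*x^2 - 8*x + 1

/-- `q(x) = 3520x⁶ + 5632x⁵ + 2064x⁴ - 384x³ - 156x² + 16x + 7` (as a real function). -/
def qR (x : ℝ) : ℝ := 3520*x^6 + 5632*x^5 + 2064*x^4 - 384*x^3 - 156*x^2 + 16*x + 7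

lemma prod_window (K : ℕ) (c : ℝ) :
    c * ∏ i ∈ Finset.range K, (c + 1 + ↑i) = (∏ i ∈ Finset.range K, (c + ↑i)) * (c + K) := by
  have h2 : ∏ i ∈ Finset.range (K+1), (c + (i:ℝ)) =
      (∏ i ∈ Finset.range K, (c + 1 + (i:ℝ))) * c := by
    rw [Finset.prod_range_succ']
    congr 1
    · exact Finset.prod_congr rfl fun i _ => by push_cast; ring
    · norm_num
  have h1 : ∏ i ∈ Finset.range (K+1), (c + (i:ℝ)) =
      (∏ i ∈ Finset.range K, (c + (i:ℝ))) * (c + K) := Finset.prod_range_succ _ _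
  rw [mul_comm c _, ← h2, h1]

lemma prod_sub_front (M : ℕ) (c : ℝ) :
    ∏ i ∈ Finset.range (M+1), (c - ↑i) = c * ∏ i ∈ Finset.range M, (c - 1 - ↑i) := by
  rw [Finset.prod_range_succ', mul_comm]
  congr 1
  · norm_num
  · exact Finset.prod_congr rfl fun i _ => by push_cast; ring

lemma prod_half_front (M : ℕ) (x : ℝ) :
    ∏ k ∈ Finset.range (M+1), (x + ↑k + 1/2) =
      (x + 1/2) * ∏ k ∈ Finset.range M, (x + 1 + ↑k + 1/2) := by
  rw [Finset.prod_range_succ', mul_comm]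
  congr 1
  · norm_num
  · exact Finset.prod_congr rfl fun i _ => by push_cast; ring

section evals
variable (m t : ℕ)

-- abbreviations (written out in statements)
-- u0 = ∏ i ∈ Finset.range m, ((t:ℝ) - ↑i)
-- V  = ∏ i ∈ Finset.range (m+1), ((t:ℝ) + (↑m+1) + 1 + ↑i)
-- Q0 = ∏ k ∈ Finset.range (m+1+1), ((t:ℝ) + ↑k + 1/2)

lemma eval1 :
    R (m+1) ↑t =
      (Nat.factorial m : ℝ) * (∏ i ∈ Finset.range m, ((t:ℝ) - ↑i)) *
        (∏ i ∈ Finset.range (m+1), ((t:ℝ) + ((m:ℝ)+1) + 1 + ↑i)) /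
        (∏ k ∈ Finset.range (m+1+1), ((t:ℝ) + ↑k + 1/2))^3 *
      (((m:ℝ)+1)*(2*↑t+↑m+2)*(↑t-↑m)) := by
  unfold R
  rw [Nat.factorial_succ]
  push_cast
  rw [Finset.prod_range_succ]
  ring

lemma eval2 :
    R (m+2) ↑t =
      (Nat.factorial m : ℝ) * (∏ i ∈ Finset.range m, ((t:ℝ) - ↑i)) *
        (∏ i ∈ Finset.range (m+1), ((t:ℝ) + ((m:ℝ)+1) + 1 + ↑i)) /
        (∏ k ∈ Finset.range (m+1+1), ((t:ℝ) + ↑k + 1/2))^3 *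
      (((m:ℝ)+1)*(↑m+2)*(2*↑t+↑m+3)*(↑t-↑m)*(↑t-↑m-1)*(↑t+2*↑m+3)*(↑t+2*↑m+4) /
        ((↑t+↑m+2)*(↑t+↑m+5/2)^3)) := by
  have hden : (0:ℝ) < ↑t+↑m+2 := by positivity
  have p2 : ∏ i ∈ Finset.range (m+2), ((t:ℝ) + (↑m+2) + 1 + ↑i) =
      (∏ i ∈ Finset.range (m+1), ((t:ℝ) + ((m:ℝ)+1) + 1 + ↑i)) *
        (↑t+2*↑m+3) * (↑t+2*↑m+4) / (↑t+↑m+2) := by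
    rw [eq_div_iff (ne_of_gt hden)]
    have w := prod_window (m+2) ((t:ℝ)+↑m+2)
    have b1 : ∏ i ∈ Finset.range (m+2), ((t:ℝ)+↑m+2 + 1 + ↑i) =
        ∏ i ∈ Finset.range (m+2), ((t:ℝ) + (↑m+2) + 1 + ↑i) :=
      Finset.prod_congr rfl fun i _ => by ring
    have b2 : ∏ i ∈ Finset.range (m+2), ((t:ℝ)+↑m+2 + ↑i) =
        (∏ i ∈ Finset.range (m+1), ((t:ℝ) + ((m:ℝ)+1) + 1 + ↑i)) * (↑t+2*↑m+3) := by
      rw [show m+2 = m+1+1 from rfl, Finset.prod_range_succ]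
      congr 1
      · exact Finset.prod_congr rfl fun i _ => by ring
      · push_cast; ring
    rw [b1, b2] at w
    push_cast at w
    linear_combination w
  have p1 : ∏ i ∈ Finset.range (m+2), ((t:ℝ) - ↑i) =
      (∏ i ∈ Finset.range m, ((t:ℝ) - ↑i)) * (↑t-↑m) * (↑t-↑m-1) := by
    rw [show m+2 = m+1+1 from rfl, Finset.prod_range_succ, Finset.prod_range_succ]
    push_cast; ring
  have q1 : ∏ k ∈ Finset.range (m+2+1), ((t:ℝ) + ↑k + 1/2) =
      (∏ k ∈ Finset.range (m+1+1), ((t:ℝ) + ↑k + 1/2)) * (↑t+↑m+5/2) := by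
    rw [show m+2+1 = (m+1+1)+1 from rfl, Finset.prod_range_succ]
    push_cast; ring
  unfold R
  rw [show (m+2).factorial = (m+2)*((m+1)*m.factorial) from by
        rw [Nat.factorial_succ, Nat.factorial_succ]]
  push_cast
  rw [p1, p2, q1]
  have hQ : (0:ℝ) < ∏ k ∈ Finset.range (m+1+1), ((t:ℝ) + ↑k + 1/2) :=
    Finset.prod_pos fun k _ => by positivity
  have hd2 : (0:ℝ) < ↑t+↑m+5/2 := by positivity
  field_simp
  ring


variable (m t : ℕ)

lemma eval0 :
    R m ↑t =
      (Nat.factorial m : ℝ) * (∏ i ∈ Finset.range m, ((t:ℝ) - ↑i)) *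
        (∏ i ∈ Finset.range (m+1), ((t:ℝ) + ((m:ℝ)+1) + 1 + ↑i)) /
        (∏ k ∈ Finset.range (m+1+1), ((t:ℝ) + ↑k + 1/2))^3 *
      ((2*↑t+↑m+1)*(↑t+↑m+1)*(↑t+↑m+3/2)^3 / ((↑t+2*↑m+1)*(↑t+2*↑m+2))) := by
  have hd : (0:ℝ) < (↑t+2*↑m+1)*(↑t+2*↑m+2) := by positivity
  have p2 : ∏ i ∈ Finset.range m, ((t:ℝ) + ↑m + 1 + ↑i) =
      (∏ i ∈ Finset.range (m+1), ((t:ℝ) + ((m:ℝ)+1) + 1 + ↑i)) * (↑t+↑m+1) /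
        ((↑t+2*↑m+1)*(↑t+2*↑m+2)) := by
    rw [eq_div_iff (ne_of_gt hd)]
    have w := prod_window (m+1) ((t:ℝ)+↑m+1)
    have b1 : ∏ i ∈ Finset.range (m+1), ((t:ℝ)+↑m+1 + 1 + ↑i) =
        ∏ i ∈ Finset.range (m+1), ((t:ℝ) + ((m:ℝ)+1) + 1 + ↑i) :=
      Finset.prod_congr rfl fun i _ => by ring
    have b2 : ∏ i ∈ Finset.range (m+1), ((t:ℝ)+↑m+1 + ↑i) =
        (∏ i ∈ Finset.range m, ((t:ℝ) + ↑m + 1 + ↑i)) * (↑t+2*↑m+1) := by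
      rw [Finset.prod_range_succ]
      push_cast; ring
    rw [b1, b2] at w
    push_cast at w
    linear_combination -w
  have q1 : ∏ k ∈ Finset.range (m+1), ((t:ℝ) + ↑k + 1/2) =
      (∏ k ∈ Finset.range (m+1+1), ((t:ℝ) + ↑k + 1/2)) / (↑t+↑m+3/2) := by
    rw [eq_div_iff (by positivity : (↑t+↑m+3/2 : ℝ) ≠ 0)]
    conv_rhs => rw [Finset.prod_range_succ]
    push_cast; ring
  unfold R
  push_cast
  rw [p2, q1]
  have hQ : (0:ℝ) < ∏ k ∈ Finset.range (m+1+1), ((t:ℝ) + ↑k + 1/2) :=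
    Finset.prod_pos fun k _ => by positivity
  have h3 : (0:ℝ) < ↑t+↑m+3/2 := by positivity
  field_simp

lemma evalp :
    R (m+1) ↑(t+1) =
      (Nat.factorial m : ℝ) * (∏ i ∈ Finset.range m, ((t:ℝ) - ↑i)) *
        (∏ i ∈ Finset.range (m+1), ((t:ℝ) + ((m:ℝ)+1) + 1 + ↑i)) /
        (∏ k ∈ Finset.range (m+1+1), ((t:ℝ) + ↑k + 1/2))^3 *
      (((m:ℝ)+1)*(2*↑t+↑m+4)*(↑t+1)*(↑t+2*↑m+3)*(↑t+1/2)^3 /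
        ((↑t+↑m+2)*(↑t+↑m+5/2)^3)) := by
  have hd : (0:ℝ) < ↑t+↑m+2 := by positivity
  have p1 : ∏ i ∈ Finset.range (m+1), ((t:ℝ)+1 - ↑i) =
      (↑t+1) * ∏ i ∈ Finset.range m, ((t:ℝ) - ↑i) := by
    rw [prod_sub_front]
    congr 1
    exact Finset.prod_congr rfl fun i _ => by ring
  have p2 : ∏ i ∈ Finset.range (m+1), ((t:ℝ)+1 + (↑m+1) + 1 + ↑i) =
      (∏ i ∈ Finset.range (m+1), ((t:ℝ) + ((m:ℝ)+1) + 1 + ↑i)) * (↑t+2*↑m+3) /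
        (↑t+↑m+2) := by
    rw [eq_div_iff (ne_of_gt hd)]
    have w := prod_window (m+1) ((t:ℝ)+↑m+2)
    have b1 : ∏ i ∈ Finset.range (m+1), ((t:ℝ)+↑m+2 + 1 + ↑i) =
        ∏ i ∈ Finset.range (m+1), ((t:ℝ)+1 + (↑m+1) + 1 + ↑i) :=
      Finset.prod_congr rfl fun i _ => by ring
    have b2 : ∏ i ∈ Finset.range (m+1), ((t:ℝ)+↑m+2 + ↑i) =
        ∏ i ∈ Finset.range (m+1), ((t:ℝ) + ((m:ℝ)+1) + 1 + ↑i) :=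
      Finset.prod_congr rfl fun i _ => by ring
    rw [b1, b2] at w
    push_cast at w
    linear_combination w
  have q1 : ∏ k ∈ Finset.range (m+1+1), ((t:ℝ)+1 + ↑k + 1/2) =
      (∏ k ∈ Finset.range (m+1+1), ((t:ℝ) + ↑k + 1/2)) * (↑t+↑m+5/2) / (↑t+1/2) := by
    rw [eq_div_iff (by positivity : (↑t+(1:ℝ)/2 : ℝ) ≠ 0)]
    have f := prod_half_front (m+1+1) ((t:ℝ))
    have g : ∏ k ∈ Finset.range ((m+1+1)+1), ((t:ℝ) + ↑k + 1/2) =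
        (∏ k ∈ Finset.range (m+1+1), ((t:ℝ) + ↑k + 1/2)) * (↑t+↑m+5/2) := by
      rw [Finset.prod_range_succ]
      push_cast; ring
    rw [g] at f
    linear_combination -f
  unfold R
  rw [Nat.factorial_succ]
  push_cast
  rw [p1, p2, q1]
  have hQ : (0:ℝ) < ∏ k ∈ Finset.range (m+1+1), ((t:ℝ) + ↑k + 1/2) :=
    Finset.prod_pos fun k _ => by positivity
  have h5 : (0:ℝ) < ↑t+↑m+5/2 := by positivity
  have h12 : (0:ℝ) < ↑t+1/2 := by positivity
  field_simp
  ring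

end evals

noncomputable def zs (y x : ℝ) : ℝ :=
  ((13/2*y + 95/2*y^2 - 389*y^3 - 646*y^4 + 5364*y^5 + 10376*y^6 - 10928*y^7 - 34208*y^8 - 18880*y^9)
   + (13/2 - 16*y - 135*y^2 - 636*y^3 + 3244*y^4 + 9504*y^5 - 17488*y^6 - 56768*y^7 - 34880*y^8)*x
   + (1/2 - 73*y - 186*y^2 + 544*y^3 + 3528*y^4 - 8784*y^5 - 32800*y^6 - 22400*y^7)*x^2
   + (-7 - 68*y - 76*y^2 + 1088*y^3 - 912*y^4 - 7104*y^5 - 5440*y^6)*x^3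
   + (-52*y + 80*y^2 + 224*y^3 - 192*y^4 - 320*y^5)*x^4)
  / ((2*x+y+1)*(x+2*y-1)*(x+2*y))

set_option maxHeartbeats 2000000 in
lemma ident (x μ : ℝ) (hx : 0 ≤ x) (hμ : 0 ≤ μ) :
    (2*(μ+1)+1)^2 * (2*(μ+1)+2)^2 * pR (μ+1) *
      ((μ+1)*(μ+2)*(2*x+μ+3)*(x-μ)*(x-μ-1)*(x+2*μ+3)*(x+2*μ+4) / ((x+μ+2)*(x+μ+5/2)^3))
    - qR (μ+1) * ((μ+1)*(2*x+μ+2)*(x-μ))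
    - (2*(μ+1)-1)^2 * (2*(μ+1))^2 * pR ((μ+1)+1) *
      ((2*x+μ+1)*(x+μ+1)*(x+μ+3/2)^3 / ((x+2*μ+1)*(x+2*μ+2)))
    = zs (μ+1) (x+1) * ((μ+1)*(2*x+μ+4)*(x+1)*(x+2*μ+3)*(x+1/2)^3 / ((x+μ+2)*(x+μ+5/2)^3))
    + zs (μ+1) x * ((μ+1)*(2*x+μ+2)*(x-μ)) := by
  unfold pR qR zs
  have h1 : (0:ℝ) < x+μ+2 := by linarith
  have h2 : (0:ℝ) < x+μ+5/2 := by linarith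
  have h3 : (0:ℝ) < x+2*μ+1 := by linarith
  have h4 : (0:ℝ) < x+2*μ+2 := by linarith
  have h5 : (0:ℝ) < 2*(x+1)+(μ+1)+1 := by linarith
  have h6 : (0:ℝ) < (x+1)+2*(μ+1)-1 := by linarith
  have h7 : (0:ℝ) < (x+1)+2*(μ+1) := by linarith
  have h8 : (0:ℝ) < 2*x+(μ+1)+1 := by linarith
  have h9 : (0:ℝ) < x+2*(μ+1)-1 := by linarith
  have h10 : (0:ℝ) < x+2*(μ+1) := by linarith
  field_simp
  ring

set_option maxHeartbeats 2000000 in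
lemma key (m t : ℕ) :
    (2*((m:ℝ)+1)+1)^2 * (2*((m:ℝ)+1)+2)^2 * pR ((m:ℝ)+1) * R (m+2) ↑t
      - qR ((m:ℝ)+1) * R (m+1) ↑t
      - (2*((m:ℝ)+1)-1)^2 * (2*((m:ℝ)+1))^2 * pR (((m:ℝ)+1)+1) * R m ↑t
    = zs ((m:ℝ)+1) ((t:ℝ)+1) * R (m+1) ↑(t+1) + zs ((m:ℝ)+1) ↑t * R (m+1) ↑t := by
  rw [eval2, eval1, eval0, evalp]
  have h := ident ↑t ↑m (Nat.cast_nonneg t) (Nat.cast_nonneg m)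
  linear_combination ((Nat.factorial m : ℝ) * (∏ i ∈ Finset.range m, ((t:ℝ) - ↑i)) *
        (∏ i ∈ Finset.range (m+1), ((t:ℝ) + ((m:ℝ)+1) + 1 + ↑i)) /
        (∏ k ∈ Finset.range (m+1+1), ((t:ℝ) + ↑k + 1/2))^3) * h

noncomputable def Epr (n t : ℕ) : ℝ := ∏ i ∈ Finset.range n, ((t:ℝ) + ↑i + 1/2)

lemma Epr_pos (n t : ℕ) : 0 < Epr n t :=
  Finset.prod_pos fun i _ => by positivity

lemma R_nonneg (n t : ℕ) : 0 ≤ R n ↑t := by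
  rcases lt_or_ge t n with h | h
  · have hz : (∏ i ∈ Finset.range n, ((t:ℝ) - ↑i)) = 0 :=
      Finset.prod_eq_zero (Finset.mem_range.mpr h) (by simp)
    unfold R; rw [hz]; simp
  · unfold R
    apply div_nonneg _ (by positivity)
    have h1 : 0 ≤ ∏ i ∈ Finset.range n, ((t:ℝ) - ↑i) :=
      Finset.prod_nonneg fun i hi => by
        have : (i:ℝ) ≤ (t:ℝ) := by
          exact_mod_cast le_of_lt (lt_of_lt_of_le (Finset.mem_range.mp hi) h)
        linarith
    have h2 : 0 ≤ ∏ i ∈ Finset.range n, ((t:ℝ) + ↑n + 1 + ↑i) :=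
      Finset.prod_nonneg fun i _ => by positivity
    have h3 : (0:ℝ) ≤ (Nat.factorial n : ℝ) * (2*↑t + ↑n + 1) := by positivity
    exact mul_nonneg h3 (mul_nonneg h1 h2)

lemma Epr_lower (n t : ℕ) (hn : 1 ≤ n) : ((t:ℝ)+1) ≤ 2^n * Epr n t := by
  obtain ⟨k, rfl⟩ : ∃ k, n = k+1 := ⟨n-1, (Nat.succ_pred_eq_of_pos hn).symm⟩
  have hE : Epr (k+1) t = (∏ i ∈ Finset.range k, ((t:ℝ) + ↑(i+1) + 1/2)) * ((t:ℝ) + ↑(0:ℕ) + 1/2) :=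
    Finset.prod_range_succ' _ _
  have h1 : ((1:ℝ)/2)^k ≤ ∏ i ∈ Finset.range k, ((t:ℝ) + ↑(i+1) + 1/2) := by
    calc ((1:ℝ)/2)^k = ∏ _i ∈ Finset.range k, ((1:ℝ)/2) := by
          rw [Finset.prod_const, Finset.card_range]
      _ ≤ ∏ i ∈ Finset.range k, ((t:ℝ) + ↑(i+1) + 1/2) := by
          apply Finset.prod_le_prod (fun i _ => by norm_num)
          intro i _
          have h0 : (0:ℝ) ≤ (t:ℝ) := Nat.cast_nonneg t
          have h0' : (0:ℝ) ≤ ((i+1:ℕ):ℝ) := Nat.cast_nonneg _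
          linarith
  have h2 : (2:ℝ)^k * (1/2)^k = 1 := by rw [← mul_pow]; norm_num
  have h0 : (0:ℝ) ≤ (t:ℝ) := Nat.cast_nonneg t
  rw [hE, pow_succ]
  have h3 : (2:ℝ)^k * (1/2)^k * (2*((t:ℝ)+1/2)) ≤
      2^k * (∏ i ∈ Finset.range k, ((t:ℝ) + ↑(i+1) + 1/2)) * (2*((t:ℝ)+1/2)) := by
    gcongr
  rw [h2] at h3
  push_cast at h3 ⊢
  nlinarith [h3]

lemma R_le3 (n t : ℕ) (hn : 1 ≤ n) :
    R n ↑t ≤ 2^(n+4) * (Nat.factorial n : ℝ) * (2*↑n+2)^n / ((t:ℝ)+1)^3 := by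
  rcases lt_or_ge t n with h | h
  · have hz : (∏ i ∈ Finset.range n, ((t:ℝ) - ↑i)) = 0 :=
      Finset.prod_eq_zero (Finset.mem_range.mpr h) (by simp)
    unfold R; rw [hz]
    simp only [zero_mul, mul_zero, zero_div]
    positivity
  · have hnx : (n:ℝ) ≤ (t:ℝ) := Nat.cast_le.mpr h
    have hx : (0:ℝ) ≤ (t:ℝ) := Nat.cast_nonneg t
    have hny : (1:ℝ) ≤ (n:ℝ) := by exact_mod_cast hn
    have hEpos := Epr_pos n t
    have hQ : ∏ k ∈ Finset.range (n+1), ((t:ℝ) + ↑k + 1/2) = Epr n t * ((t:ℝ)+↑n+1/2) :=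
      Finset.prod_range_succ _ _
    have hP1 : ∏ i ∈ Finset.range n, ((t:ℝ) - ↑i) ≤ Epr n t := by
      apply Finset.prod_le_prod
      · intro i hi
        have : (i:ℝ) ≤ (t:ℝ) := by
          exact_mod_cast le_of_lt (lt_of_lt_of_le (Finset.mem_range.mp hi) h)
        linarith
      · intro i _
        have : (0:ℝ) ≤ (i:ℝ) := Nat.cast_nonneg i
        linarith
    have hP2 : ∏ i ∈ Finset.range n, ((t:ℝ) + ↑n + 1 + ↑i) ≤ (2*↑n+2)^n * Epr n t := by
      calc ∏ i ∈ Finset.range n, ((t:ℝ) + ↑n + 1 + ↑i) ≤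
            ∏ i ∈ Finset.range n, ((2*(n:ℝ)+2) * ((t:ℝ) + ↑i + 1/2)) := by
            apply Finset.prod_le_prod
            · intro i _; positivity
            · intro i _
              have hi : (0:ℝ) ≤ (i:ℝ) := Nat.cast_nonneg i
              nlinarith [mul_nonneg (Nat.cast_nonneg (α := ℝ) n) hi,
                mul_nonneg (Nat.cast_nonneg (α := ℝ) n) hx]
        _ = (2*↑n+2)^n * Epr n t := by
            rw [Finset.prod_mul_distrib, Finset.prod_const, Finset.card_range]; rfl
    have hE1 : (t:ℝ)+1 ≤ 2^n * Epr n t := Epr_lower n t hn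
    have hP1nn : 0 ≤ ∏ i ∈ Finset.range n, ((t:ℝ) - ↑i) :=
      Finset.prod_nonneg fun i hi => by
        have : (i:ℝ) ≤ (t:ℝ) := by
          exact_mod_cast le_of_lt (lt_of_lt_of_le (Finset.mem_range.mp hi) h)
        linarith
    unfold R
    rw [hQ]
    have step1 : (Nat.factorial n : ℝ) * (2*↑t + ↑n + 1) *
        ((∏ i ∈ Finset.range n, ((t:ℝ) - ↑i)) * ∏ i ∈ Finset.range n, ((t:ℝ) + ↑n + 1 + ↑i)) /
        (Epr n t * ((t:ℝ)+↑n+1/2))^3 ≤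
        (Nat.factorial n : ℝ) * (2*↑t + ↑n + 1) * (Epr n t * ((2*↑n+2)^n * Epr n t)) /
        (Epr n t * ((t:ℝ)+↑n+1/2))^3 := by
      gcongr
    apply step1.trans
    rw [div_le_div_iff₀ (by positivity) (by positivity)]
    have hs : (t:ℝ)+1 ≤ (t:ℝ)+↑n+1/2 := by linarith
    have h2s : 2*(t:ℝ)+↑n+1 ≤ 2*((t:ℝ)+↑n+1/2) := by linarith
    have hspos : (0:ℝ) < (t:ℝ)+↑n+1/2 := by linarith
    have hPE : (0:ℝ) ≤ (2:ℝ)^n * Epr n t := by positivity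
    have m1 : (2*(t:ℝ)+↑n+1)*((t:ℝ)+1) ≤ (2*((t:ℝ)+↑n+1/2))*((2:ℝ)^n * Epr n t) :=
      mul_le_mul h2s hE1 (by linarith) (by linarith)
    have m2 : ((t:ℝ)+1)^2 ≤ ((t:ℝ)+↑n+1/2)^2 := by nlinarith
    have m3 : ((2*(t:ℝ)+↑n+1)*((t:ℝ)+1))*(((t:ℝ)+1)^2) ≤
        ((2*((t:ℝ)+↑n+1/2))*((2:ℝ)^n * Epr n t))*(((t:ℝ)+↑n+1/2)^2) := by
      apply mul_le_mul m1 m2 (by positivity)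
      apply mul_nonneg (by linarith) hPE
    have hABE2 : (0:ℝ) ≤ (Nat.factorial n : ℝ) * (2*↑n+2)^n * (Epr n t)^2 := by positivity
    have hES3 : (0:ℝ) ≤ (Nat.factorial n : ℝ) * (2*↑n+2)^n * (Epr n t * ((t:ℝ)+↑n+1/2))^3 := by
      apply mul_nonneg (by positivity)
      apply pow_nonneg (mul_nonneg hEpos.le hspos.le)
    have hPpos : (0:ℝ) < 2^n := by positivity
    calc (Nat.factorial n : ℝ) * (2*↑t + ↑n + 1) * (Epr n t * ((2*↑n+2)^n * Epr n t)) * ((t:ℝ)+1)^3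
        = ((Nat.factorial n : ℝ) * (2*↑n+2)^n * (Epr n t)^2) *
            (((2*(t:ℝ)+↑n+1)*((t:ℝ)+1))*(((t:ℝ)+1)^2)) := by ring
      _ ≤ ((Nat.factorial n : ℝ) * (2*↑n+2)^n * (Epr n t)^2) *
            (((2*((t:ℝ)+↑n+1/2))*((2:ℝ)^n * Epr n t))*(((t:ℝ)+↑n+1/2)^2)) :=
          mul_le_mul_of_nonneg_left m3 hABE2
      _ = (2*2^n) * ((Nat.factorial n : ℝ) * (2*↑n+2)^n * (Epr n t * ((t:ℝ)+↑n+1/2))^3) := by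
          ring
      _ ≤ (16*2^n) * ((Nat.factorial n : ℝ) * (2*↑n+2)^n * (Epr n t * ((t:ℝ)+↑n+1/2))^3) := by
          apply mul_le_mul_of_nonneg_right _ hES3
          nlinarith
      _ = 2^(n+4) * (Nat.factorial n : ℝ) * (2*↑n+2)^n * (Epr n t * ((t:ℝ)+↑n+1/2))^3 := by
          rw [show (2:ℝ)^(n+4) = 2^n*16 by rw [pow_add]; norm_num]
          ring


lemma R_le2 (n t : ℕ) :
    R n ↑t ≤ 2^(n+4) * (Nat.factorial n : ℝ) * (2*↑n+2)^n / ((t:ℝ)+1)^2 := by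
  have hx : (0:ℝ) ≤ (t:ℝ) := Nat.cast_nonneg t
  rcases Nat.eq_zero_or_pos n with rfl | hn
  · unfold R
    norm_num [Finset.prod_range_one]
    rw [div_le_div_iff₀ (by positivity) (by positivity)]
    nlinarith [mul_nonneg hx hx, mul_nonneg (mul_nonneg hx hx) hx]
  · apply (R_le3 n t hn).trans
    rw [div_le_div_iff₀ (by positivity) (by positivity)]
    have h23 : ((t:ℝ)+1)^2 ≤ ((t:ℝ)+1)^3 := by nlinarith [mul_nonneg hx hx]
    have hC : (0:ℝ) ≤ 2^(n+4) * (Nat.factorial n : ℝ) * (2*↑n+2)^n := by positivity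
    calc 2^(n+4) * (Nat.factorial n : ℝ) * (2*↑n+2)^n * ((t:ℝ)+1)^2
        ≤ 2^(n+4) * (Nat.factorial n : ℝ) * (2*↑n+2)^n * ((t:ℝ)+1)^3 :=
          mul_le_mul_of_nonneg_left h23 hC
      _ = 2^(n+4) * (Nat.factorial n : ℝ) * (2*↑n+2)^n * ((t:ℝ)+1)^3 := rfl

lemma summable_R (n : ℕ) : Summable (fun t : ℕ => (-1:ℝ)^t * R n ↑t) := by
  apply Summable.of_abs
  have habs : ∀ t : ℕ, |(-1:ℝ)^t * R n ↑t| = R n ↑t := fun t => by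
    rw [abs_mul, abs_pow, abs_neg, abs_one, one_pow, one_mul, abs_of_nonneg (R_nonneg n t)]
  simp only [habs]
  have base : Summable (fun t : ℕ => 1 / ((t:ℝ)+1)^2) := by
    have h0 : Summable (fun t : ℕ => 1 / ((t:ℝ))^2) := Real.summable_one_div_nat_pow.mpr one_lt_two
    have h1 := (_root_.summable_nat_add_iff (f := fun t : ℕ => 1 / ((t:ℝ))^2) 1).mpr h0
    apply h1.congr
    intro t
    push_cast
    ring
  apply Summable.of_nonneg_of_le (fun t => R_nonneg n t) (fun t => R_le2 n t)
  apply (base.mul_left (2^(n+4) * (Nat.factorial n : ℝ) * (2*↑n+2)^n)).congr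
  intro t
  rw [mul_one_div]


set_option maxHeartbeats 2000000 in
lemma zs_bound (n t : ℕ) (hn : 1 ≤ n) :
    |zs ↑n ↑t| ≤ 300000 * ((n:ℝ))^9 * ((t:ℝ)+1) := by
  have hx : (0:ℝ) ≤ ↑t := Nat.cast_nonneg t
  have hy : (1:ℝ) ≤ ↑n := by exact_mod_cast hn
  have hy0 : (0:ℝ) ≤ ↑n := by linarith
  unfold zs
  set C0 := (13/2*(n:ℝ) + 95/2*(n:ℝ)^2 - 389*(n:ℝ)^3 - 646*(n:ℝ)^4 + 5364*(n:ℝ)^5 + 10376*(n:ℝ)^6 - 10928*(n:ℝ)^7 - 34208*(n:ℝ)^8 - 18880*(n:ℝ)^9) with hC0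
  set C1 := (13/2 - 16*(n:ℝ) - 135*(n:ℝ)^2 - 636*(n:ℝ)^3 + 3244*(n:ℝ)^4 + 9504*(n:ℝ)^5 - 17488*(n:ℝ)^6 - 56768*(n:ℝ)^7 - 34880*(n:ℝ)^8) with hC1
  set C2 := (1/2 - 73*(n:ℝ) - 186*(n:ℝ)^2 + 544*(n:ℝ)^3 + 3528*(n:ℝ)^4 - 8784*(n:ℝ)^5 - 32800*(n:ℝ)^6 - 22400*(n:ℝ)^7) with hC2
  set C3 := (-7 - 68*(n:ℝ) - 76*(n:ℝ)^2 + 1088*(n:ℝ)^3 - 912*(n:ℝ)^4 - 7104*(n:ℝ)^5 - 5440*(n:ℝ)^6) with hC3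
  set C4 := (-52*(n:ℝ) + 80*(n:ℝ)^2 + 224*(n:ℝ)^3 - 192*(n:ℝ)^4 - 320*(n:ℝ)^5) with hC4
  have hd1 : (0:ℝ) < 2*(t:ℝ)+(n:ℝ)+1 := by linarith
  have hd2 : (0:ℝ) < (t:ℝ)+2*(n:ℝ)-1 := by linarith
  have hd3 : (0:ℝ) < (t:ℝ)+2*(n:ℝ) := by linarith
  have hdpos : (0:ℝ) < (2*(t:ℝ)+(n:ℝ)+1)*((t:ℝ)+2*(n:ℝ)-1)*((t:ℝ)+2*(n:ℝ)) :=
    mul_pos (mul_pos hd1 hd2) hd3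
  rw [abs_div, abs_of_pos hdpos, div_le_iff₀ hdpos]
  have q1 : (0:ℝ) ≤ (n:ℝ)^1 := by positivity
  have q2 : (0:ℝ) ≤ (n:ℝ)^2 := by positivity
  have q3 : (0:ℝ) ≤ (n:ℝ)^3 := by positivity
  have q4 : (0:ℝ) ≤ (n:ℝ)^4 := by positivity
  have q5 : (0:ℝ) ≤ (n:ℝ)^5 := by positivity
  have q6 : (0:ℝ) ≤ (n:ℝ)^6 := by positivity
  have q7 : (0:ℝ) ≤ (n:ℝ)^7 := by positivity
  have q8 : (0:ℝ) ≤ (n:ℝ)^8 := by positivity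
  have q9 : (0:ℝ) ≤ (n:ℝ)^9 := by positivity
  have p0 : (1:ℝ) ≤ (n:ℝ)^9 := by
    calc (1:ℝ) = 1^9 := by norm_num
      _ ≤ (n:ℝ)^9 := pow_le_pow_left₀ (by norm_num) hy 9
  have pe : ((n:ℝ):ℝ) ≤ (n:ℝ)^9 := by
    calc (n:ℝ) = (n:ℝ)^1 := (pow_one _).symm
      _ ≤ (n:ℝ)^9 := pow_le_pow_right₀ hy (by norm_num)
  have p2 : ((n:ℝ))^2 ≤ (n:ℝ)^9 := pow_le_pow_right₀ hy (by norm_num)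
  have p3 : ((n:ℝ))^3 ≤ (n:ℝ)^9 := pow_le_pow_right₀ hy (by norm_num)
  have p4 : ((n:ℝ))^4 ≤ (n:ℝ)^9 := pow_le_pow_right₀ hy (by norm_num)
  have p5 : ((n:ℝ))^5 ≤ (n:ℝ)^9 := pow_le_pow_right₀ hy (by norm_num)
  have p6 : ((n:ℝ))^6 ≤ (n:ℝ)^9 := pow_le_pow_right₀ hy (by norm_num)
  have p7 : ((n:ℝ))^7 ≤ (n:ℝ)^9 := pow_le_pow_right₀ hy (by norm_num)
  have p8 : ((n:ℝ))^8 ≤ (n:ℝ)^9 := pow_le_pow_right₀ hy (by norm_num)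
  have hb0 : |C0| ≤ 80845*(n:ℝ)^9 := by
    rw [abs_le]; constructor
    · rw [hC0]; linarith
    · rw [hC0]; linarith
  have hb1 : |C1| ≤ (245355/2)*(n:ℝ)^9 := by
    rw [abs_le]; constructor
    · rw [hC1]; linarith
    · rw [hC1]; linarith
  have hb2 : |C2| ≤ (136631/2)*(n:ℝ)^9 := by
    rw [abs_le]; constructor
    · rw [hC2]; linarith
    · rw [hC2]; linarith
  have hb3 : |C3| ≤ 14695*(n:ℝ)^9 := by
    rw [abs_le]; constructor
    · rw [hC3]; linarith
    · rw [hC3]; linarith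
  have hb4 : |C4| ≤ 868*(n:ℝ)^9 := by
    rw [abs_le]; constructor
    · rw [hC4]; linarith
    · rw [hC4]; linarith
  have hx1 : (1:ℝ) ≤ (t:ℝ)+1 := by linarith
  have hX0 : (1:ℝ) ≤ ((t:ℝ)+1)^4 := by
    calc (1:ℝ) = 1^4 := by norm_num
      _ ≤ ((t:ℝ)+1)^4 := pow_le_pow_left₀ (by norm_num) hx1 4
  have hX1 : (t:ℝ) ≤ ((t:ℝ)+1)^4 := by
    calc (t:ℝ) ≤ (t:ℝ)+1 := by linarith
      _ = ((t:ℝ)+1)^1 := (pow_one _).symm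
      _ ≤ ((t:ℝ)+1)^4 := pow_le_pow_right₀ hx1 (by norm_num)
  have hX2 : (t:ℝ)^2 ≤ ((t:ℝ)+1)^4 := by
    calc (t:ℝ)^2 ≤ ((t:ℝ)+1)^2 := pow_le_pow_left₀ hx (by linarith) 2
      _ ≤ ((t:ℝ)+1)^4 := pow_le_pow_right₀ hx1 (by norm_num)
  have hX3 : (t:ℝ)^3 ≤ ((t:ℝ)+1)^4 := by
    calc (t:ℝ)^3 ≤ ((t:ℝ)+1)^3 := pow_le_pow_left₀ hx (by linarith) 3
      _ ≤ ((t:ℝ)+1)^4 := pow_le_pow_right₀ hx1 (by norm_num)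
  have hX4 : (t:ℝ)^4 ≤ ((t:ℝ)+1)^4 := pow_le_pow_left₀ hx (by linarith) 4
  have t1 := abs_add_le (C0 + C1*(t:ℝ) + C2*(t:ℝ)^2 + C3*(t:ℝ)^3) (C4*(t:ℝ)^4)
  have t2 := abs_add_le (C0 + C1*(t:ℝ) + C2*(t:ℝ)^2) (C3*(t:ℝ)^3)
  have t3 := abs_add_le (C0 + C1*(t:ℝ)) (C2*(t:ℝ)^2)
  have t4 := abs_add_le C0 (C1*(t:ℝ))
  have e1 : |C1*(t:ℝ)| = |C1| * (t:ℝ) := by rw [abs_mul, abs_of_nonneg hx]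
  have e2 : |C2*(t:ℝ)^2| = |C2| * (t:ℝ)^2 := by rw [abs_mul, abs_pow, abs_of_nonneg hx]
  have e3 : |C3*(t:ℝ)^3| = |C3| * (t:ℝ)^3 := by rw [abs_mul, abs_pow, abs_of_nonneg hx]
  have e4 : |C4*(t:ℝ)^4| = |C4| * (t:ℝ)^4 := by rw [abs_mul, abs_pow, abs_of_nonneg hx]
  have m0 : |C0| ≤ (80845*(n:ℝ)^9)*((t:ℝ)+1)^4 := by
    calc |C0| ≤ 80845*(n:ℝ)^9 := hb0
      _ = (80845*(n:ℝ)^9)*1 := (mul_one _).symm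
      _ ≤ (80845*(n:ℝ)^9)*((t:ℝ)+1)^4 :=
          mul_le_mul_of_nonneg_left hX0 (by positivity)
  have m1 : |C1| * (t:ℝ) ≤ ((245355/2)*(n:ℝ)^9)*((t:ℝ)+1)^4 :=
    mul_le_mul hb1 hX1 hx (by positivity)
  have m2 : |C2| * (t:ℝ)^2 ≤ ((136631/2)*(n:ℝ)^9)*((t:ℝ)+1)^4 :=
    mul_le_mul hb2 hX2 (by positivity) (by positivity)
  have m3 : |C3| * (t:ℝ)^3 ≤ (14695*(n:ℝ)^9)*((t:ℝ)+1)^4 :=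
    mul_le_mul hb3 hX3 (by positivity) (by positivity)
  have m4 : |C4| * (t:ℝ)^4 ≤ (868*(n:ℝ)^9)*((t:ℝ)+1)^4 :=
    mul_le_mul hb4 hX4 (by positivity) (by positivity)
  have hNle : |C0 + C1*(t:ℝ) + C2*(t:ℝ)^2 + C3*(t:ℝ)^3 + C4*(t:ℝ)^4| ≤
      300000*(n:ℝ)^9*((t:ℝ)+1)^4 := by
    have hM : (0:ℝ) ≤ (n:ℝ)^9*((t:ℝ)+1)^4 := by positivity
    linarith [t1, t2, t3, t4, m0, m1, m2, m3, m4, e1, e2, e3, e4]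
  have a1 : (t:ℝ)+1 ≤ 2*(t:ℝ)+(n:ℝ)+1 := by linarith
  have a2 : (t:ℝ)+1 ≤ (t:ℝ)+2*(n:ℝ)-1 := by linarith
  have a3 : (t:ℝ)+1 ≤ (t:ℝ)+2*(n:ℝ) := by linarith
  have hden : ((t:ℝ)+1)^3 ≤ (2*(t:ℝ)+(n:ℝ)+1)*((t:ℝ)+2*(n:ℝ)-1)*((t:ℝ)+2*(n:ℝ)) := by
    calc ((t:ℝ)+1)^3 = (((t:ℝ)+1)*((t:ℝ)+1))*((t:ℝ)+1) := by ring
      _ ≤ ((2*(t:ℝ)+(n:ℝ)+1)*((t:ℝ)+2*(n:ℝ)-1))*((t:ℝ)+2*(n:ℝ)) := by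
          apply mul_le_mul _ a3 (by linarith) (mul_nonneg hd1.le hd2.le)
          exact mul_le_mul a1 a2 (by linarith) hd1.le
  have last : (300000*(n:ℝ)^9*((t:ℝ)+1))*(((t:ℝ)+1)^3) ≤
      (300000*(n:ℝ)^9*((t:ℝ)+1))*((2*(t:ℝ)+(n:ℝ)+1)*((t:ℝ)+2*(n:ℝ)-1)*((t:ℝ)+2*(n:ℝ))) :=
    mul_le_mul_of_nonneg_left hden (by positivity)
  have efin : (300000*(n:ℝ)^9*((t:ℝ)+1))*(((t:ℝ)+1)^3) = 300000*(n:ℝ)^9*((t:ℝ)+1)^4 := by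
    ring
  linarith [hNle, last, efin]

noncomputable def Sf (m t : ℕ) : ℝ := (-1:ℝ)^t * (zs ((m:ℝ)+1) ↑t * R (m+1) ↑t)

lemma tail_tendsto (m : ℕ) :
    Filter.Tendsto (fun N : ℕ => Sf m N) Filter.atTop (nhds 0) := by
  unfold Sf
  apply squeeze_zero_norm
    (a := fun N : ℕ => (300000*((m:ℝ)+1)^9 *
      (2^(m+1+4) * ((Nat.factorial (m+1)) : ℝ) * (2*(↑(m+1):ℝ)+2)^(m+1))) * (1/((N:ℝ)+1)))
  · intro N
    have hμnn : (0:ℝ) ≤ (m:ℝ)+1 := by positivity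
    have h1 : ‖(-1:ℝ)^N * (zs ((m:ℝ)+1) ↑N * R (m+1) ↑N)‖ =
        |zs ((m:ℝ)+1) ↑N| * R (m+1) ↑N := by
      rw [Real.norm_eq_abs, abs_mul, abs_mul, abs_pow, abs_neg, abs_one, one_pow, one_mul,
        abs_of_nonneg (R_nonneg (m+1) N)]
    rw [h1]
    have h2 : |zs ((m:ℝ)+1) ↑N| ≤ 300000*((m:ℝ)+1)^9*((N:ℝ)+1) := by
      have h := zs_bound (m+1) N (Nat.le_add_left 1 m)
      push_cast at h
      exact h
    have h3 := R_le3 (m+1) N (Nat.le_add_left 1 m)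
    have hCpos : (0:ℝ) ≤ 2^(m+1+4) * ((Nat.factorial (m+1)) : ℝ) * (2*(↑(m+1):ℝ)+2)^(m+1) := by
      positivity
    have hNpos : (0:ℝ) < (N:ℝ)+1 := by positivity
    calc |zs ((m:ℝ)+1) ↑N| * R (m+1) ↑N
        ≤ (300000*((m:ℝ)+1)^9*((N:ℝ)+1)) *
            (2^(m+1+4) * ((Nat.factorial (m+1)) : ℝ) * (2*(↑(m+1):ℝ)+2)^(m+1) / ((N:ℝ)+1)^3) :=
          mul_le_mul h2 h3 (R_nonneg (m+1) N) (by positivity)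
      _ = (300000*((m:ℝ)+1)^9 *
            (2^(m+1+4) * ((Nat.factorial (m+1)) : ℝ) * (2*(↑(m+1):ℝ)+2)^(m+1))) *
            (1/((N:ℝ)+1)^2) := by
          field_simp
      _ ≤ (300000*((m:ℝ)+1)^9 *
            (2^(m+1+4) * ((Nat.factorial (m+1)) : ℝ) * (2*(↑(m+1):ℝ)+2)^(m+1))) *
            (1/((N:ℝ)+1)) := by
          apply mul_le_mul_of_nonneg_left _ (by positivity)
          apply div_le_div_of_nonneg_left (by norm_num) hNpos
          nlinarith [hNpos]
  · have h := tendsto_one_div_add_atTop_nhds_zero_nat (𝕜 := ℝ)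
    have := h.const_mul (300000*((m:ℝ)+1)^9 *
      (2^(m+1+4) * ((Nat.factorial (m+1)) : ℝ) * (2*(↑(m+1):ℝ)+2)^(m+1)))
    simpa using this

/-- for `n ≥ 1`, `F_n` satisfies the difference equation
`(2n+1)²(2n+2)² p(n) F_{n+1} - q(n) F_n - (2n-1)²(2n)² p(n+1) F_{n-1} = 0`. -/
theorem F_difference_equation :
    ∀ n : ℕ, 1 ≤ n →
      (2*(n : ℝ)+1)^2 * (2*(n : ℝ)+2)^2 * pR (n : ℝ) * F (n+1)
          - qR (n : ℝ) * F n
          - (2*(n : ℝ)-1)^2 * (2*(n : ℝ))^2 * pR ((n : ℝ)+1) * F (n-1) = 0 := by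
  intro n hn
  obtain ⟨m, rfl⟩ : ∃ m, n = m+1 := ⟨n-1, (Nat.succ_pred_eq_of_pos hn).symm⟩
  have hS : ∀ k : ℕ, HasSum (fun t : ℕ => (-1:ℝ)^t * R k ↑t) (F k) :=
    fun k => (summable_R k).hasSum
  have hsum : HasSum (fun t : ℕ =>
      (2*((m:ℝ)+1)+1)^2*(2*((m:ℝ)+1)+2)^2*pR ((m:ℝ)+1) * ((-1:ℝ)^t * R (m+2) ↑t)
      - qR ((m:ℝ)+1) * ((-1:ℝ)^t * R (m+1) ↑t)
      - (2*((m:ℝ)+1)-1)^2*(2*((m:ℝ)+1))^2*pR (((m:ℝ)+1)+1) * ((-1:ℝ)^t * R m ↑t))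
      ((2*((m:ℝ)+1)+1)^2*(2*((m:ℝ)+1)+2)^2*pR ((m:ℝ)+1) * F (m+2)
       - qR ((m:ℝ)+1) * F (m+1)
       - (2*((m:ℝ)+1)-1)^2*(2*((m:ℝ)+1))^2*pR (((m:ℝ)+1)+1) * F m) :=
    (((hS (m+2)).mul_left _).sub ((hS (m+1)).mul_left _)).sub ((hS m).mul_left _)
  have htend := hsum.tendsto_sum_nat
  have htail := tail_tendsto m
  have htel : ∀ N : ℕ, (∑ t ∈ Finset.range N,
      ((2*((m:ℝ)+1)+1)^2*(2*((m:ℝ)+1)+2)^2*pR ((m:ℝ)+1) * ((-1:ℝ)^t * R (m+2) ↑t)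
      - qR ((m:ℝ)+1) * ((-1:ℝ)^t * R (m+1) ↑t)
      - (2*((m:ℝ)+1)-1)^2*(2*((m:ℝ)+1))^2*pR (((m:ℝ)+1)+1) * ((-1:ℝ)^t * R m ↑t)))
      = Sf m 0 - Sf m N := by
    intro N
    rw [← Finset.sum_range_sub' (Sf m) N]
    apply Finset.sum_congr rfl
    intro t _
    have hk := key m t
    unfold Sf
    push_cast [pow_succ] at hk ⊢
    linear_combination ((-1:ℝ)^t) * hk
  have hf0 : Sf m 0 = 0 := by
    have hz : (∏ i ∈ Finset.range (m+1), (((0:ℕ):ℝ) - ↑i)) = 0 :=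
      Finset.prod_eq_zero (Finset.mem_range.mpr (Nat.succ_pos m)) (by norm_num)
    have hR0 : R (m+1) ((0:ℕ):ℝ) = 0 := by
      unfold R; rw [hz]; simp
    unfold Sf
    rw [pow_zero, one_mul, hR0, mul_zero]
  have h4 : Filter.Tendsto (fun N : ℕ => (∑ t ∈ Finset.range N,
      ((2*((m:ℝ)+1)+1)^2*(2*((m:ℝ)+1)+2)^2*pR ((m:ℝ)+1) * ((-1:ℝ)^t * R (m+2) ↑t)
      - qR ((m:ℝ)+1) * ((-1:ℝ)^t * R (m+1) ↑t)
      - (2*((m:ℝ)+1)-1)^2*(2*((m:ℝ)+1))^2*pR (((m:ℝ)+1)+1) * ((-1:ℝ)^t * R m ↑t))))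
      Filter.atTop (nhds 0) := by
    have hneg := htail.neg
    rw [neg_zero] at hneg
    apply hneg.congr
    intro N
    rw [htel N, hf0, zero_sub]
  have hval := tendsto_nhds_unique htend h4
  have hred : m+1-1 = m := rfl
  rw [hred]
  push_cast
  linarith [hval]
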